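/- In a free group, no nontrivial element is conjugate to its own inverse. -/

import Mathlib

open FreeGroup List

namespace NoConjInv

variable {α : Type*}

/-- A word is reduced: no letter is immediately followed by its inverse. -/
def Reduced (L : List (α × Bool)) : Prop :=
  List.Chain' (fun p q => q ≠ (p.1, !p.2)) L

lemma reduced_infix {L M : List (α × Bool)} (h : Reduced L) (h' : M <:+: L) :
    Reduced M := List.IsChain.infix h h'

lemma cond_iff (p q : α × Bool) : (p.1 = q.1 ∧ p.2 = !q.2) ↔ q = (p.1, !p.2) := by
  rcases p with ⟨a, b⟩; rcases q with ⟨c, d⟩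
  cases b <;> cases d <;> simp [eq_comm]

lemma reduce_eq_self [DecidableEq α] {L : List (α × Bool)} (h : Reduced L) :
    FreeGroup.reduce L = L := by
  induction L with
  | nil => rfl
  | cons x L ih =>
    have hL : Reduced L := h.tail
    rw [FreeGroup.reduce.cons, ih hL]
    cases L with
    | nil => rfl
    | cons y t =>
      have hxy : y ≠ (x.1, !x.2) := (List.isChain_cons_cons.mp h).1
      have : ¬(x.1 = y.1 ∧ x.2 = !y.2) := by rw [cond_iff]; exact hxy
      simp [this]

lemma reduced_reduce [DecidableEq α] (L : List (α × Bool)) :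
    Reduced (FreeGroup.reduce L) := by
  induction L with
  | nil => exact List.isChain_nil
  | cons x L ih =>
    rw [FreeGroup.reduce.cons]
    rcases h : FreeGroup.reduce L with _ | ⟨y, t⟩
    · exact List.isChain_singleton x
    · rw [h] at ih
      by_cases hc : x.1 = y.1 ∧ x.2 = !y.2
      · simp only [hc, if_true]
        exact ih.tail
      · simp only [hc, if_false]
        exact List.isChain_cons_cons.mpr ⟨fun hy => hc ((cond_iff x y).mpr hy), ih⟩

lemma reduced_toWord [DecidableEq α] (x : FreeGroup α) : Reduced x.toWord := by
  rw [← FreeGroup.reduce_toWord]; exact reduced_reduce _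

lemma toWord_mk_eq [DecidableEq α] {L : List (α × Bool)} (h : Reduced L) :
    (FreeGroup.mk L).toWord = L := by
  rw [FreeGroup.toWord_mk, reduce_eq_self h]

lemma invRev_cons (x : α × Bool) (L : List (α × Bool)) :
    invRev (x :: L) = invRev L ++ [(x.1, !x.2)] := by
  simp [invRev]

lemma invRev_append' (s t : List (α × Bool)) :
    invRev (s ++ t) = invRev t ++ invRev s := by
  simp [invRev]

lemma flip_flip (x : α × Bool) : ((x.1, !x.2).1, !(x.1, !x.2).2) = x := by simp

lemma inv_mk_singleton (x : α × Bool) :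
    (FreeGroup.mk [x])⁻¹ = FreeGroup.mk [(x.1, !x.2)] := by
  rw [FreeGroup.inv_mk]; rfl

lemma mk_singleton_mul_flip (x : α × Bool) :
    FreeGroup.mk [x] * FreeGroup.mk [(x.1, !x.2)] = 1 := by
  rw [← inv_mk_singleton, mul_inv_cancel]

/-- A reduced word equal to its own `invRev` is empty. -/
lemma eq_nil_of_invRev_eq {v : List (α × Bool)} (hr : Reduced v) (h : invRev v = v) :
    v = [] := by
  by_contra hne
  set n := v.length with hn
  have hpos : 0 < n := List.length_pos_iff.mpr hne
  have hidx : ∀ i, i < n →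
      v[i]? = (v[n - 1 - i]?).map (fun g => (g.1, !g.2)) := by
    intro i hi
    conv_lhs => rw [← h]
    simp only [invRev]
    rw [List.getElem?_reverse (by simpa using hi)]
    have : (List.map (fun g : α × Bool => (g.1, !g.2)) v).length = n := by simp [hn]
    rw [this, List.getElem?_map]
  rcases Nat.even_or_odd n with ⟨m, hm⟩ | ⟨m, hm⟩
  · -- n = 2m, m ≥ 1; positions m-1, m are an adjacent inverse pair
    have hm1 : 1 ≤ m := by omega
    have e1 := hidx m (by omega)
    rw [show n - 1 - m = m - 1 from by omega] at e1
    rw [List.getElem?_eq_getElem (show m < v.length from by omega),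
      List.getElem?_eq_getElem (show m - 1 < v.length from by omega)] at e1
    simp only [Option.map_some, Option.some_inj] at e1
    have hchain := List.isChain_iff_getElem.mp hr (m - 1) (by omega)
    simp only [List.get_eq_getElem, show m - 1 + 1 = m from by omega] at hchain
    exact hchain e1
  · -- n = 2m+1; middle position m has v[m].2 = !v[m].2
    have e1 := hidx m (by omega)
    rw [show n - 1 - m = m from by omega] at e1
    rw [List.getElem?_eq_getElem (show m < v.length from by omega)] at e1
    simp only [Option.map_some, Option.some_inj] at e1
    have := congrArg Prod.snd e1
    simp at this

lemma reduced_of_cyc {c : List (α × Bool)} (h : Reduced (c ++ c)) : Reduced c :=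
  reduced_infix h (List.prefix_append c c).isInfix

lemma cyc_three {c : List (α × Bool)} (h : Reduced (c ++ c)) :
    Reduced (c ++ (c ++ c)) := by
  rcases List.isChain_append.mp h with ⟨h1, _, h3⟩
  refine List.isChain_append.mpr ⟨h1, h, ?_⟩
  intro x hx y hy
  refine h3 x hx y ?_
  cases c with
  | nil => simp at hx
  | cons a t => simpa using hy

lemma cyc_rot {s t : List (α × Bool)} (h : Reduced ((s ++ t) ++ (s ++ t))) :
    Reduced ((t ++ s) ++ (t ++ s)) := by
  have h3 := cyc_three h
  refine reduced_infix h3 ⟨s, t, ?_⟩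
  simp [List.append_assoc]

lemma cyc_isRotated {c c' : List (α × Bool)} (h : c ~r c') (hc : Reduced (c ++ c)) :
    Reduced (c' ++ c') := by
  obtain ⟨n, rfl⟩ := h
  rw [List.rotate_eq_drop_append_take_mod]
  exact cyc_rot (s := c.take (n % c.length)) (t := c.drop (n % c.length))
    (by rwa [List.take_append_drop])

/-- Single-letter conjugation step. -/
lemma step (x : α × Bool) {u c : List (α × Bool)}
    (hcr : Reduced (c ++ c)) (hne : c ≠ [])
    (hred : Reduced (u ++ c ++ invRev u)) :
    ∃ u' c', c ~r c' ∧ Reduced (c' ++ c') ∧ Reduced (u' ++ c' ++ invRev u') ∧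
      FreeGroup.mk [x] * FreeGroup.mk (u ++ c ++ invRev u) * (FreeGroup.mk [x])⁻¹ =
        FreeGroup.mk (u' ++ c' ++ invRev u') := by
  classical
  rcases u with _ | ⟨y, u⟩
  · -- u = []
    simp only [FreeGroup.invRev_empty, List.append_nil, List.nil_append] at hred ⊢
    by_cases h1 : c.head? = some (x.1, !x.2)
    · -- front cancellation
      obtain ⟨rest, rfl⟩ : ∃ rest, c = (x.1, !x.2) :: rest := by
        cases c with
        | nil => simp at h1
        | cons z rest =>
          have : z = (x.1, !x.2) := by simpa using h1
          exact ⟨rest, by rw [this]⟩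
      have hrot : ((x.1, !x.2) :: rest) ~r (rest ++ [(x.1, !x.2)]) := by
        simpa using (List.isRotated_append (l := [(x.1, !x.2)]) (l' := rest))
      have hcr2 := cyc_isRotated hrot hcr
      refine ⟨[], rest ++ [(x.1, !x.2)], hrot, hcr2, ?_, ?_⟩
      · simpa [FreeGroup.invRev_empty] using reduced_of_cyc hcr2
      · simp only [FreeGroup.invRev_empty, List.append_nil, List.nil_append]
        rw [show ((x.1, !x.2) :: rest) = [(x.1, !x.2)] ++ rest from rfl,
          ← FreeGroup.mul_mk, ← FreeGroup.mul_mk, ← inv_mk_singleton]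
        group
    · by_cases h2 : c.getLast? = some x
      · -- back cancellation
        obtain ⟨rest, rfl⟩ : ∃ rest, c = rest ++ [x] := by
          rcases c.eq_nil_or_concat with rfl | ⟨r, z, rfl⟩
          · exact absurd rfl hne
          · rw [List.concat_eq_append, List.getLast?_concat] at h2
            exact ⟨r, by rw [List.concat_eq_append, Option.some_inj.mp h2]⟩
        have hrot : (rest ++ [x]) ~r (x :: rest) := by
          simpa using (List.isRotated_append (l := rest) (l' := [x]))
        have hcr2 := cyc_isRotated hrot hcr
        refine ⟨[], x :: rest, hrot, hcr2, ?_, ?_⟩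
        · simpa [FreeGroup.invRev_empty] using reduced_of_cyc hcr2
        · simp only [FreeGroup.invRev_empty, List.append_nil, List.nil_append]
          rw [show (x :: rest) = [x] ++ rest from rfl,
            ← FreeGroup.mul_mk, ← FreeGroup.mul_mk]
          group
      · -- no cancellation: u' = [x]
        have hinv : invRev [x] = [(x.1, !x.2)] := by simp [invRev]
        refine ⟨[x], c, IsRotated.refl c, hcr, ?_, ?_⟩
        · rw [hinv, List.append_assoc]
          refine List.isChain_append.mpr ⟨List.isChain_singleton x, List.isChain_append.mpr
            ⟨reduced_of_cyc hcr, List.isChain_singleton _, ?_⟩, ?_⟩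
          · -- junction: last of c vs (x.1, !x.2)
            intro p hp q hq
            simp only [List.head?_cons, Option.mem_def, Option.some_inj] at hq
            subst hq
            intro hpq
            apply h2
            rw [Option.mem_def] at hp
            rw [hp, Option.some_inj]
            have h3 := congrArg (fun r : α × Bool => (r.1, !r.2)) hpq
            simpa [flip_flip] using h3.symm
          · -- junction: x vs head of c
            intro p hp q hq
            obtain rfl : p = x := by simpa [eq_comm] using hp
            intro hq2
            apply h1
            rw [List.head?_append] at hq
            cases c with
            | nil => exact absurd rfl hne
            | cons a t =>
              simp only [List.head?_cons, Option.or_some, Option.mem_def,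
                Option.some_inj, Option.getD_some] at hq
              rw [List.head?_cons, Option.some_inj]
              rw [hq, hq2]
        · rw [hinv, ← FreeGroup.mul_mk, ← FreeGroup.mul_mk, ← inv_mk_singleton]
  · -- u = y :: u
    by_cases h1 : y = (x.1, !x.2)
    · -- cancellation with first letter of u
      subst h1
      have e1 : ((x.1, !x.2) :: u) ++ c ++ invRev ((x.1, !x.2) :: u)
          = [(x.1, !x.2)] ++ ((u ++ c ++ invRev u) ++ [x]) := by
        rw [invRev_cons, flip_flip]; simp [List.append_assoc]
      refine ⟨u, c, IsRotated.refl c, hcr, ?_, ?_⟩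
      · exact reduced_infix (e1 ▸ hred) ⟨[(x.1, !x.2)], [x], by simp [List.append_assoc]⟩
      · rw [e1, ← FreeGroup.mul_mk, ← FreeGroup.mul_mk, ← mul_assoc, ← mul_assoc,
          mk_singleton_mul_flip, one_mul, mul_assoc, mul_inv_cancel, mul_one]
    · -- no cancellation: u' = x :: y :: u
      have e1 : (x :: y :: u) ++ c ++ invRev (x :: y :: u)
          = [x] ++ (((y :: u) ++ c ++ invRev (y :: u)) ++ [(x.1, !x.2)]) := by
        rw [invRev_cons (x := x)]; simp [List.append_assoc]
      refine ⟨x :: y :: u, c, IsRotated.refl c, hcr, ?_, ?_⟩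
      · rw [e1]
        refine List.isChain_append.mpr ⟨List.isChain_singleton x,
          List.isChain_append.mpr ⟨hred, List.isChain_singleton _, ?_⟩, ?_⟩
        · -- junction: last of ((y::u) ++ c ++ invRev (y::u)) vs (x.1, !x.2)
          intro p hp q hq
          simp only [Option.mem_def, List.head?_cons, Option.some_inj] at hq
          subst hq
          have hplast : p = (y.1, !y.2) := by
            have e2 : (y :: u) ++ c ++ invRev (y :: u)
                = ((y :: u) ++ c ++ invRev u) ++ [(y.1, !y.2)] := by
              rw [invRev_cons]; simp [List.append_assoc]
            rw [Option.mem_def, e2, List.getLast?_concat, Option.some_inj] at hp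
            exact hp.symm
          subst hplast
          intro hcon
          have h3 : (x.1, !x.2) = y := by simpa [flip_flip] using hcon
          exact h1 h3.symm
        · -- junction: x vs y
          intro p hp q hq
          obtain rfl : p = x := by simpa [eq_comm] using hp
          have hqy : q = y := by
            simp only [List.cons_append, List.head?_cons, Option.mem_def,
              Option.some_inj] at hq
            exact hq.symm
          subst hqy
          exact fun hcon => h1 hcon
      · rw [e1]
        simp only [← FreeGroup.mul_mk, ← inv_mk_singleton]
        group

lemma NF_aux (G : List (α × Bool)) {c : List (α × Bool)}
    (hcr : Reduced (c ++ c)) (hne : c ≠ []) :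
    ∃ u c', c ~r c' ∧ Reduced (c' ++ c') ∧ Reduced (u ++ c' ++ invRev u) ∧
      FreeGroup.mk G * FreeGroup.mk c * (FreeGroup.mk G)⁻¹ =
        FreeGroup.mk (u ++ c' ++ invRev u) := by
  induction G with
  | nil =>
    refine ⟨[], c, IsRotated.refl c, hcr, ?_, ?_⟩
    · simpa [FreeGroup.invRev_empty] using reduced_of_cyc hcr
    · simp only [FreeGroup.invRev_empty, List.append_nil, List.nil_append]
      have : (FreeGroup.mk ([] : List (α × Bool))) = 1 := rfl
      rw [this]; group
  | cons x G ih =>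
    obtain ⟨u, c', hrot, hcr', hred', heq⟩ := ih
    have hne' : c' ≠ [] := by
      intro h
      apply hne
      have := hrot.perm.length_eq
      rw [h] at this
      exact List.length_eq_zero_iff.mp (by simpa using this)
    obtain ⟨u₂, c₂, hrot₂, hcr₂, hred₂, heq₂⟩ := step x hcr' hne' hred'
    refine ⟨u₂, c₂, hrot.trans hrot₂, hcr₂, hred₂, ?_⟩
    have hx : FreeGroup.mk (x :: G) = FreeGroup.mk [x] * FreeGroup.mk G := by
      rw [FreeGroup.mul_mk]; rfl
    rw [hx, ← heq₂, ← heq]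
    group

lemma main_aux [DecidableEq α] :
    ∀ n : ℕ, ∀ w g : FreeGroup α, w.toWord.length < n → w ≠ 1 →
      g * w * g⁻¹ = w⁻¹ → False := by
  intro n
  induction n with
  | zero => intro w g h; omega
  | succ n ih =>
    intro w g hlen hw hconj
    have hWred : Reduced w.toWord := reduced_toWord w
    have hWne : w.toWord ≠ [] := fun h => hw (FreeGroup.toWord_eq_nil_iff.mp h)
    by_cases hJ : ∀ p ∈ w.toWord.getLast?, ∀ q ∈ w.toWord.head?, q ≠ (p.1, !p.2)
    · -- w is cyclically reduced
      have hcr : Reduced (w.toWord ++ w.toWord) :=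
        List.isChain_append.mpr ⟨hWred, hWred, hJ⟩
      obtain ⟨u, c', hrot, hcr', hred', heq⟩ := NF_aux g.toWord hcr hWne
      rw [FreeGroup.mk_toWord, FreeGroup.mk_toWord, hconj] at heq
      have h2 : invRev w.toWord = u ++ c' ++ invRev u := by
        have h3 := congrArg FreeGroup.toWord heq
        rwa [FreeGroup.toWord_inv, toWord_mk_eq hred'] at h3
      have hu : u = [] := by
        have l1 : w.toWord.length = c'.length := hrot.perm.length_eq
        have l2 := congrArg List.length h2
        simp only [List.length_append, FreeGroup.invRev_length] at l2
        have : u.length = 0 := by omega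
        exact List.length_eq_zero_iff.mp this
      subst hu
      simp only [FreeGroup.invRev_empty, List.append_nil, List.nil_append] at h2
      -- c' is a rotation of w.toWord equal to invRev w.toWord
      obtain ⟨k, hk⟩ := hrot
      rw [List.rotate_eq_drop_append_take_mod] at hk
      set m := k % w.toWord.length with hm
      set s := w.toWord.take m with hs
      set t := w.toWord.drop m with ht
      have hW : w.toWord = s ++ t := (List.take_append_drop m w.toWord).symm
      have h4 : invRev t ++ invRev s = t ++ s := by
        rw [← invRev_append', ← hW, h2, ← hk]
      have h5 : invRev t = t ∧ invRev s = s :=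
        List.append_inj h4 (by rw [FreeGroup.invRev_length])
      have hsred : Reduced s := reduced_infix hWred (hW ▸ (List.prefix_append s t).isInfix)
      have htred : Reduced t := reduced_infix hWred (hW ▸ (List.suffix_append s t).isInfix)
      have hts : t = [] := eq_nil_of_invRev_eq htred h5.1
      have hss : s = [] := eq_nil_of_invRev_eq hsred h5.2
      apply hWne
      rw [hW, hts, hss]; rfl
    · -- w is not cyclically reduced: strip the outer letters
      push_neg at hJ
      obtain ⟨p, hp, q, hq, hq2⟩ := hJ
      rcases w.toWord.eq_nil_or_concat with hnil | ⟨W', p', hWp⟩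
      · exact hWne hnil
      rw [List.concat_eq_append] at hWp
      have hpp : p = p' := by
        rw [hWp, List.getLast?_concat, Option.mem_def] at hp
        exact (Option.some_inj.mp hp).symm
      subst hpp
      rcases W' with _ | ⟨y, M⟩
      · -- w.toWord = [p] : impossible since q = p and q = (p.1, !p.2)
        rw [hWp] at hq
        simp only [List.nil_append, List.head?_cons, Option.mem_def,
          Option.some_inj] at hq
        rw [← hq] at hq2
        have := congrArg Prod.snd hq2
        simp at this
      · -- w.toWord = q :: M ++ [p]
        have hyq : y = q := by
          rw [hWp] at hq
          simpa [eq_comm] using hq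
        subst hyq
        have hWfull : w.toWord = [y] ++ M ++ [p] := by simpa using hWp
        have hMred : Reduced M :=
          reduced_infix hWred ⟨[y], [p], by rw [hWfull]⟩
        have hMne : M ≠ [] := by
          rintro rfl
          have h5 : Reduced [y, p] := by
            have h6 := hWred
            rw [hWfull] at h6
            simpa using h6
          have h5' : List.Chain' (fun p q => q ≠ (p.1, !p.2)) [y, p] := h5
          apply (List.isChain_cons_cons.mp h5').1
          rw [hq2, flip_flip]
        set w' := FreeGroup.mk M with hw'
        set a := FreeGroup.mk [y] with ha
        have hMword : w'.toWord = M := toWord_mk_eq hMred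
        have hw'ne : w' ≠ 1 := by
          intro h
          apply hMne
          rw [← hMword, h, FreeGroup.toWord_one]
        have hpa : FreeGroup.mk [p] = a⁻¹ := by
          rw [ha, inv_mk_singleton]
          congr 2
          rw [hq2, flip_flip]
        have hwdecomp : w = a * w' * a⁻¹ := by
          conv_lhs => rw [← FreeGroup.mk_toWord (x := w)]
          rw [hWfull, ← FreeGroup.mul_mk, ← FreeGroup.mul_mk, hpa, hw', ha]
        have hlen2 : w'.toWord.length < n := by
          have : w.toWord.length = M.length + 2 := by
            rw [hWfull]; simp
          rw [hMword]
          omega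
        apply ih w' (a⁻¹ * g * a) hlen2 hw'ne
        calc (a⁻¹ * g * a) * w' * (a⁻¹ * g * a)⁻¹
            = a⁻¹ * (g * (a * w' * a⁻¹) * g⁻¹) * a := by group
          _ = a⁻¹ * (a * w' * a⁻¹)⁻¹ * a := by rw [← hwdecomp, hconj, hwdecomp]
          _ = w'⁻¹ := by group

end NoConjInv

theorem free_group_no_conjugate_to_inverse {α : Type*} (w : FreeGroup α)
    (hw : w ≠ 1) : ¬ ∃ g : FreeGroup α, g * w * g⁻¹ = w⁻¹ := by
  classical
  rintro ⟨g, hg⟩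
  exact NoConjInv.main_aux (w.toWord.length + 1) w g (Nat.lt_succ_self _) hw hg
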